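/- arXiv:2205.11149 — 6 statements merged into one kernel-verified Lean document; each statement's English description precedes it below -/
import Mathlib

section
/- Continuous stability (Theorem 2.1): there exist constants c > 0 and C > 0, depending only on C_F and the operator norm ‖G‖, such that for every pair (w, χ) ∈ V × Q there exists r ∈ V with B(w, χ; r, −χ) ≥ c (‖w‖_V + ‖div χ‖₋₁)² and ‖r‖_V ≤ C (‖w‖_V + ‖div χ‖₋₁). -/
open scoped RealInnerProductSpace

/-- The dual seminorm `‖div χ‖₋₁ = sup_{v ≠ 0} ⟨χ, G v⟩ / ‖v‖`. -/
noncomputable def divNorm {V Q : Type*} [NormedAddCommGroup V] [InnerProductSpace ℝ V]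
    [NormedAddCommGroup Q] [InnerProductSpace ℝ Q] (G : V →L[ℝ] Q) (χ : Q) : ℝ :=
  ⨆ v : {v : V // v ≠ 0}, ⟪χ, G (v : V)⟫ / ‖(v : V)‖

/-- The saddle-point bilinear form `B(w, χ; v, μ)`. -/
noncomputable def saddleB {V Q : Type*} [NormedAddCommGroup V] [InnerProductSpace ℝ V]
    [NormedAddCommGroup Q] [InnerProductSpace ℝ Q] (G : V →L[ℝ] Q)
    (w : V) (χ : Q) (v : V) (μ : Q) : ℝ :=
  ⟪G w, G v⟫ + ⟪χ, G v⟫ + ⟪μ, G w⟫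

set_option maxHeartbeats 1000000 in
/-- Continuous stability (Theorem 2.1): for every pair `(w, χ) ∈ V × Q` there exists
`r ∈ V` with `B(w, χ; r, −χ) ≥ c (‖w‖ + ‖div χ‖₋₁)²` and `‖r‖ ≤ C (‖w‖ + ‖div χ‖₋₁)`. -/
theorem continuous_stability
    {V Q : Type*} [NormedAddCommGroup V] [InnerProductSpace ℝ V] [CompleteSpace V]
    [NormedAddCommGroup Q] [InnerProductSpace ℝ Q] [CompleteSpace Q]
    (G : V →L[ℝ] Q) (C_F : ℝ) (hC_F : 0 < C_F)
    (hFriedrichs : ∀ v : V, ‖v‖ ≤ C_F * ‖G v‖) :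
    ∃ c > 0, ∃ C > 0, ∀ (w : V) (χ : Q), ∃ r : V,
      c * (‖w‖ + divNorm G χ) ^ 2 ≤ saddleB G w χ r (-χ) ∧
      ‖r‖ ≤ C * (‖w‖ + divNorm G χ) := by
  set M : ℝ := ‖G‖ + 1 with hM
  clear_value M
  have hM0 : 0 < M := by rw [hM]; positivity
  have hMne : M ≠ 0 := ne_of_gt hM0
  have hCFne : C_F ≠ 0 := ne_of_gt hC_F
  have hGM : ∀ v : V, ‖G v‖ ≤ M * ‖v‖ := by
    intro v
    calc ‖G v‖ ≤ ‖G‖ * ‖v‖ := G.le_opNorm v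
      _ ≤ M * ‖v‖ := by
        have : ‖G‖ ≤ M := by simp [hM]
        exact mul_le_mul_of_nonneg_right this (norm_nonneg v)
  set β : ℝ := 1 / (2 * C_F ^ 2 * M ^ 4) with hβ
  clear_value β
  have hβ0 : 0 < β := by rw [hβ]; positivity
  refine ⟨min (1 / (4 * C_F ^ 2)) (β / 8), by positivity, 1 + β, by positivity, ?_⟩
  intro w χ
  set d := divNorm G χ with hd
  clear_value d
  -- the family is bounded above
  have hbdd : BddAbove (Set.range fun v : {v : V // v ≠ 0} => ⟪χ, G (v : V)⟫ / ‖(v : V)‖) := by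
    refine ⟨‖χ‖ * M, ?_⟩
    rintro _ ⟨⟨v, hv⟩, rfl⟩
    have hv0 : (0 : ℝ) < ‖v‖ := norm_pos_iff.mpr hv
    rw [div_le_iff₀ hv0]
    calc ⟪χ, G v⟫ ≤ ‖χ‖ * ‖G v‖ := real_inner_le_norm _ _
      _ ≤ ‖χ‖ * (M * ‖v‖) := mul_le_mul_of_nonneg_left (hGM v) (norm_nonneg χ)
      _ = ‖χ‖ * M * ‖v‖ := by ring
  -- d ≥ 0
  have hd0 : 0 ≤ d := by
    by_cases hne : Nonempty {v : V // v ≠ 0}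
    · obtain ⟨v⟩ := hne
      have h1 := le_ciSup hbdd v
      have h2 := le_ciSup hbdd (⟨-(v : V), neg_ne_zero.mpr v.2⟩ : {v : V // v ≠ 0})
      simp only [inner_neg_right, map_neg, norm_neg, neg_div] at h2
      rw [hd, divNorm]
      linarith
    · rw [not_nonempty_iff] at hne
      rw [hd, divNorm, Real.iSup_of_isEmpty]
  have hw2 : ‖w‖ ^ 2 ≤ C_F ^ 2 * ‖G w‖ ^ 2 := by
    have := hFriedrichs w
    nlinarith [norm_nonneg w, norm_nonneg (G w)]
  rcases eq_or_lt_of_le hd0 with hdz | hdp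
  · -- case d = 0 : take r = w
    refine ⟨w, ?_, ?_⟩
    · have hBeq : saddleB G w χ w (-χ) = ‖G w‖ ^ 2 := by
        simp only [saddleB, inner_neg_left, real_inner_self_eq_norm_sq]
        ring
      rw [hBeq, ← hdz]
      have hle : min (1 / (4 * C_F ^ 2)) (β / 8) ≤ 1 / (4 * C_F ^ 2) := min_le_left _ _
      have h1 : min (1 / (4 * C_F ^ 2)) (β / 8) * (‖w‖ + 0) ^ 2 ≤
          1 / (4 * C_F ^ 2) * ‖w‖ ^ 2 := by
        rw [add_zero]
        exact mul_le_mul_of_nonneg_right hle (by positivity)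
      have h2 : 1 / (4 * C_F ^ 2) * ‖w‖ ^ 2 ≤ ‖G w‖ ^ 2 := by
        rw [div_mul_eq_mul_div, one_mul, div_le_iff₀ (by positivity)]
        nlinarith [norm_nonneg (G w)]
      linarith
    · rw [← hdz, add_zero]
      nlinarith [norm_nonneg w]
  · -- case d > 0 : take a near-maximizer
    have hne : Nonempty {v : V // v ≠ 0} := by
      by_contra h
      rw [not_nonempty_iff] at h
      rw [hd, divNorm, Real.iSup_of_isEmpty] at hdp
      exact lt_irrefl 0 hdp
    have hlt : d / 2 < ⨆ v : {v : V // v ≠ 0}, ⟪χ, G (v : V)⟫ / ‖(v : V)‖ := by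
      rw [← divNorm, ← hd]; linarith
    obtain ⟨⟨v, hv⟩, hvlt⟩ := exists_lt_of_lt_ciSup hlt
    have hv0 : (0 : ℝ) < ‖v‖ := norm_pos_iff.mpr hv
    set s : V := ‖v‖⁻¹ • v with hs
    clear_value s
    have hsnorm : ‖s‖ = 1 := by
      rw [hs, norm_smul, norm_inv, norm_norm, inv_mul_cancel₀ (ne_of_gt hv0)]
    have hχs : d / 2 < ⟪χ, G s⟫ := by
      have : ⟪χ, G s⟫ = ⟪χ, G v⟫ / ‖v‖ := by
        rw [hs, map_smul, real_inner_smul_right, div_eq_inv_mul]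
      rw [this]; exact hvlt
    refine ⟨w + (β * d) • s, ?_, ?_⟩
    · have hBeq : saddleB G w χ (w + (β * d) • s) (-χ) =
          ‖G w‖ ^ 2 + (β * d) * ⟪G w, G s⟫ + (β * d) * ⟪χ, G s⟫ := by
        simp only [saddleB, map_add, map_smul, inner_add_right, real_inner_smul_right,
          inner_neg_left, real_inner_self_eq_norm_sq]
        ring
      rw [hBeq]
      have hGs : ‖G s‖ ≤ M := by
        have := hGM s
        rwa [hsnorm, mul_one] at this
      have hip : -(M * ‖w‖ * M) ≤ ⟪G w, G s⟫ := by
        have h1 := abs_real_inner_le_norm (G w) (G s)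
        have h2 : ‖G w‖ * ‖G s‖ ≤ (M * ‖w‖) * M := by
          have := hGM w
          nlinarith [norm_nonneg (G s), norm_nonneg w, norm_nonneg (G w)]
        have h3 := neg_abs_le ⟪G w, G s⟫
        nlinarith [abs_nonneg ⟪G w, G s⟫]
      -- key arithmetic
      have hβM : β * M ^ 4 = 1 / (2 * C_F ^ 2) := by
        rw [hβ]; field_simp
      have hyoung : M ^ 2 * d * ‖w‖ ≤ d ^ 2 / 4 + M ^ 4 * ‖w‖ ^ 2 := by
        nlinarith [sq_nonneg (d / 2 - M ^ 2 * ‖w‖)]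
      have hmin1 : min (1 / (4 * C_F ^ 2)) (β / 8) ≤ 1 / (4 * C_F ^ 2) := min_le_left _ _
      have hmin2 : min (1 / (4 * C_F ^ 2)) (β / 8) ≤ β / 8 := min_le_right _ _
      have hmin0 : 0 < min (1 / (4 * C_F ^ 2)) (β / 8) := by positivity
      have hGw2 : 1 / C_F ^ 2 * ‖w‖ ^ 2 ≤ ‖G w‖ ^ 2 := by
        rw [div_mul_eq_mul_div, one_mul, div_le_iff₀ (by positivity)]
        linarith [hw2]
      -- bound B from below
      have hB_lb : 1 / (2 * C_F ^ 2) * ‖w‖ ^ 2 + β / 4 * d ^ 2 ≤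
          ‖G w‖ ^ 2 + (β * d) * ⟪G w, G s⟫ + (β * d) * ⟪χ, G s⟫ := by
        have h1 : (β * d) * ⟪G w, G s⟫ ≥ -(β * d * (M * ‖w‖ * M)) := by
          have hβd : 0 ≤ β * d := by positivity
          nlinarith
        have h2 : (β * d) * ⟪χ, G s⟫ ≥ β * d * (d / 2) := by
          have hβd : 0 ≤ β * d := by positivity
          nlinarith
        have h3 : β * (M ^ 2 * d * ‖w‖) ≤ β * (d ^ 2 / 4 + M ^ 4 * ‖w‖ ^ 2) :=
          mul_le_mul_of_nonneg_left hyoung (le_of_lt hβ0)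
        have hβM2 : β * M ^ 4 * ‖w‖ ^ 2 = 1 / (2 * C_F ^ 2) * ‖w‖ ^ 2 := by rw [hβM]
        have e1w : 1 / C_F ^ 2 * ‖w‖ ^ 2 = 2 * (1 / (2 * C_F ^ 2) * ‖w‖ ^ 2) := by ring
        nlinarith [h1, h2, h3, hGw2, hβM2, e1w]
      -- and (‖w‖+d)² ≤ 2‖w‖² + 2d²
      have hsum : (‖w‖ + d) ^ 2 ≤ 2 * ‖w‖ ^ 2 + 2 * d ^ 2 := by
        nlinarith [sq_nonneg (‖w‖ - d)]
      have : min (1 / (4 * C_F ^ 2)) (β / 8) * (‖w‖ + d) ^ 2 ≤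
          1 / (2 * C_F ^ 2) * ‖w‖ ^ 2 + β / 4 * d ^ 2 := by
        have h1 : min (1 / (4 * C_F ^ 2)) (β / 8) * (‖w‖ + d) ^ 2 ≤
            min (1 / (4 * C_F ^ 2)) (β / 8) * (2 * ‖w‖ ^ 2 + 2 * d ^ 2) :=
          mul_le_mul_of_nonneg_left hsum (le_of_lt hmin0)
        have h2 : min (1 / (4 * C_F ^ 2)) (β / 8) * (2 * ‖w‖ ^ 2) ≤
            1 / (2 * C_F ^ 2) * ‖w‖ ^ 2 := by
          have e2 : 1 / (4 * C_F ^ 2) * ‖w‖ ^ 2 * 2 = 1 / (2 * C_F ^ 2) * ‖w‖ ^ 2 := by ring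
          nlinarith [mul_le_mul_of_nonneg_right hmin1 (sq_nonneg ‖w‖), e2]
        have h3 : min (1 / (4 * C_F ^ 2)) (β / 8) * (2 * d ^ 2) ≤ β / 4 * d ^ 2 := by
          nlinarith [mul_le_mul_of_nonneg_right hmin2 (sq_nonneg d)]
        nlinarith
      linarith
    · calc ‖w + (β * d) • s‖ ≤ ‖w‖ + ‖(β * d) • s‖ := norm_add_le _ _
        _ = ‖w‖ + β * d := by
          rw [norm_smul, hsnorm, mul_one, Real.norm_eq_abs, abs_of_pos (by positivity)]
        _ ≤ (1 + β) * (‖w‖ + d) := by nlinarith [norm_nonneg w]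
end

section
/- Discrete stability (Theorem 3.1): there exist constants c > 0 and C > 0, depending only on C_F, the operator norm ‖G‖ and the inf-sup constant β, such that for every pair (w_h, χ_h) ∈ V_h × Q_h there exists r_h ∈ V_h with B(w_h, χ_h; r_h, −χ_h) ≥ c (‖w_h‖_V + ‖div χ_h‖₋₁)² and ‖r_h‖_V ≤ C (‖w_h‖_V + ‖div χ_h‖₋₁). -/
open scoped RealInnerProductSpace

/-- The discrete supremum `sup_{v_h ∈ V_h, v_h ≠ 0} ⟨χ, G v_h⟩ / ‖v_h‖`. -/
noncomputable def discSup {V Q : Type*} [NormedAddCommGroup V] [InnerProductSpace ℝ V]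
    [NormedAddCommGroup Q] [InnerProductSpace ℝ Q] (G : V →L[ℝ] Q)
    (Vh : Submodule ℝ V) (χ : Q) : ℝ :=
  ⨆ v : {v : V // v ∈ Vh ∧ v ≠ 0}, ⟪χ, G (v : V)⟫ / ‖(v : V)‖

lemma divNorm_nonneg {V Q : Type*} [NormedAddCommGroup V] [InnerProductSpace ℝ V]
    [NormedAddCommGroup Q] [InnerProductSpace ℝ Q] (G : V →L[ℝ] Q) (χ : Q) :
    0 ≤ divNorm G χ := by
  by_cases h : Nonempty {v : V // v ≠ 0}
  · obtain ⟨v⟩ := h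
    have hbdd : BddAbove (Set.range fun v : {v : V // v ≠ 0} => ⟪χ, G (v : V)⟫ / ‖(v : V)‖) := by
      refine ⟨‖χ‖ * ‖G‖, ?_⟩
      rintro _ ⟨w, rfl⟩
      have hw : (0:ℝ) < ‖(w : V)‖ := norm_pos_iff.mpr w.2
      rw [div_le_iff₀ hw]
      calc ⟪χ, G (w : V)⟫ ≤ ‖χ‖ * ‖G (w : V)‖ := real_inner_le_norm _ _
        _ ≤ ‖χ‖ * (‖G‖ * ‖(w : V)‖) := by
            gcongr; exact G.le_opNorm _
        _ = ‖χ‖ * ‖G‖ * ‖(w : V)‖ := by ring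
    have h1 := le_ciSup hbdd v
    have h2 := le_ciSup hbdd ⟨-(v : V), neg_ne_zero.mpr v.2⟩
    simp only [map_neg, inner_neg_right, norm_neg, neg_div] at h2
    unfold divNorm
    linarith
  · rw [not_nonempty_iff] at h
    rw [divNorm, Real.iSup_of_isEmpty]

lemma exists_approx {V Q : Type*} [NormedAddCommGroup V] [InnerProductSpace ℝ V]
    [NormedAddCommGroup Q] [InnerProductSpace ℝ Q] (G : V →L[ℝ] Q)
    (Vh : Submodule ℝ V) (χ : Q) (β : ℝ) (hβ : 0 < β)
    (hIS : β * divNorm G χ ≤ discSup G Vh χ) :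
    ∃ u ∈ Vh, ‖u‖ ≤ 1 ∧ β / 2 * (divNorm G χ) ^ 2 ≤ divNorm G χ * ⟪χ, G u⟫ := by
  set N := divNorm G χ with hNdef
  have hN0 : 0 ≤ N := divNorm_nonneg G χ
  rcases hN0.eq_or_lt with hN | hN
  · exact ⟨0, Vh.zero_mem, by simp, by simp [← hN]⟩
  · have hlt : β * N / 2 < discSup G Vh χ := by nlinarith
    have hne : Nonempty {v : V // v ∈ Vh ∧ v ≠ 0} := by
      by_contra hc
      rw [not_nonempty_iff] at hc
      rw [discSup, Real.iSup_of_isEmpty] at hlt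
      nlinarith
    obtain ⟨v, hv⟩ := exists_lt_of_lt_ciSup hlt
    have hvpos : (0:ℝ) < ‖(v : V)‖ := norm_pos_iff.mpr v.2.2
    refine ⟨‖(v : V)‖⁻¹ • (v : V), Vh.smul_mem _ v.2.1, le_of_eq (norm_smul_inv_norm v.2.2), ?_⟩
    have : ⟪χ, G (‖(v : V)‖⁻¹ • (v : V))⟫ = ⟪χ, G (v : V)⟫ / ‖(v : V)‖ := by
      rw [map_smul, real_inner_smul_right, div_eq_inv_mul]
    rw [this]
    nlinarith

set_option maxHeartbeats 1000000 in
/-- Discrete stability (Theorem 3.1): under the discrete Babuška–Brezzi condition,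
for every `(w_h, χ_h) ∈ V_h × Q_h` there exists `r_h ∈ V_h` such that
`B(w_h, χ_h; r_h, −χ_h) ≥ c (‖w_h‖ + ‖div χ_h‖₋₁)²` and
`‖r_h‖ ≤ C (‖w_h‖ + ‖div χ_h‖₋₁)`. -/
theorem discrete_stability
    {V Q : Type*} [NormedAddCommGroup V] [InnerProductSpace ℝ V] [CompleteSpace V]
    [NormedAddCommGroup Q] [InnerProductSpace ℝ Q] [CompleteSpace Q]
    (G : V →L[ℝ] Q) (C_F : ℝ) (hC_F : 0 < C_F)
    (hFriedrichs : ∀ v : V, ‖v‖ ≤ C_F * ‖G v‖)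
    (Vh : Submodule ℝ V) (Qh : Submodule ℝ Q)
    (hVh : IsClosed (Vh : Set V)) (hQh : IsClosed (Qh : Set Q))
    (β : ℝ) (hβ : 0 < β)
    (hInfSup : ∀ χh ∈ Qh, β * divNorm G χh ≤ discSup G Vh χh) :
    ∃ c > 0, ∃ C > 0, ∀ wh ∈ Vh, ∀ χh ∈ Qh, ∃ rh ∈ Vh,
      c * (‖wh‖ + divNorm G χh) ^ 2 ≤ saddleB G wh χh rh (-χh) ∧
      ‖rh‖ ≤ C * (‖wh‖ + divNorm G χh) := by
  obtain ⟨M, hM, hGM⟩ : ∃ M : ℝ, 0 < M ∧ ‖G‖ ≤ M :=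
    ⟨‖G‖ + 1, by positivity, by linarith [norm_nonneg G]⟩
  obtain ⟨δ, hδ, hδM⟩ : ∃ δ : ℝ, 0 < δ ∧ δ * (2 * M ^ 2) = β :=
    ⟨β / (2 * M ^ 2), by positivity, by field_simp⟩
  obtain ⟨m, hm0, hma, hmb⟩ :
      ∃ m : ℝ, 0 < m ∧ m ≤ 1 / (2 * C_F ^ 2) ∧ m ≤ δ ^ 2 * M ^ 2 / 2 :=
    ⟨min (1 / (2 * C_F ^ 2)) (δ ^ 2 * M ^ 2 / 2), by positivity, min_le_left _ _,
      min_le_right _ _⟩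
  refine ⟨m / 2, by positivity, 1 + δ, by positivity, ?_⟩
  intro wh hwh χh hχh
  set N := divNorm G χh with hNdef
  have hN0 : 0 ≤ N := divNorm_nonneg G χh
  obtain ⟨u, huVh, hu1, hkey⟩ := exists_approx G Vh χh β hβ (hInfSup χh hχh)
  rw [← hNdef] at hkey
  have hGu : ‖G u‖ ≤ M := by
    have h' := G.le_opNorm u
    have : ‖G‖ * ‖u‖ ≤ M * 1 :=
      mul_le_mul hGM hu1 (norm_nonneg u) hM.le
    linarith
  have h2 : -(‖G wh‖ * M) ≤ ⟪G wh, G u⟫ := by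
    have hcs := abs_real_inner_le_norm (G wh) (G u)
    have h' : ‖G wh‖ * ‖G u‖ ≤ ‖G wh‖ * M := by gcongr
    have habs := abs_le.mp hcs
    linarith
  have h1 : ‖wh‖ ≤ C_F * ‖G wh‖ := hFriedrichs wh
  clear_value N
  clear hNdef hInfSup
  refine ⟨wh + (δ * N) • u, Vh.add_mem hwh (Vh.smul_mem _ huVh), ?_, ?_⟩
  · have hB : saddleB G wh χh (wh + (δ * N) • u) (-χh)
        = ‖G wh‖ ^ 2 + (δ * N) * ⟪G wh, G u⟫ + (δ * N) * ⟪χh, G u⟫ := by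
      simp only [saddleB, map_add, map_smul, inner_add_right, real_inner_smul_right,
        inner_neg_left, real_inner_self_eq_norm_sq]
      ring
    rw [hB]
    have key1 : 1 / (2 * C_F ^ 2) * ‖wh‖ ^ 2 ≤ 1 / 2 * ‖G wh‖ ^ 2 := by
      rw [div_mul_eq_mul_div, div_le_iff₀ (by positivity)]
      nlinarith [norm_nonneg wh, norm_nonneg (G wh)]
    have key2 : δ ^ 2 * M ^ 2 / 2 * N ^ 2
        ≤ 1 / 2 * ‖G wh‖ ^ 2 + (δ * N) * ⟪G wh, G u⟫ + (δ * N) * ⟪χh, G u⟫ := by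
      have hδN : (0:ℝ) ≤ δ * N := by positivity
      have hy : -(1 / 2 * ‖G wh‖ ^ 2 + δ ^ 2 * M ^ 2 * N ^ 2 / 2) ≤ (δ * N) * ⟪G wh, G u⟫ := by
        have hh := mul_le_mul_of_nonneg_left h2 hδN
        nlinarith [sq_nonneg (‖G wh‖ - δ * M * N)]
      have hz : δ ^ 2 * M ^ 2 * N ^ 2 ≤ (δ * N) * ⟪χh, G u⟫ := by
        rw [← hδM] at hkey
        have hh := mul_le_mul_of_nonneg_left hkey (le_of_lt hδ)
        nlinarith [hh]
      linarith
    have e1 : m / 2 * (‖wh‖ + N) ^ 2 ≤ m * ‖wh‖ ^ 2 + m * N ^ 2 := by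
      nlinarith [sq_nonneg (‖wh‖ - N), hm0.le]
    have e2 : m * ‖wh‖ ^ 2 ≤ 1 / (2 * C_F ^ 2) * ‖wh‖ ^ 2 :=
      mul_le_mul_of_nonneg_right hma (sq_nonneg _)
    have e3 : m * N ^ 2 ≤ δ ^ 2 * M ^ 2 / 2 * N ^ 2 :=
      mul_le_mul_of_nonneg_right hmb (sq_nonneg _)
    linarith
  · have hn1 : ‖wh + (δ * N) • u‖ ≤ ‖wh‖ + ‖(δ * N) • u‖ := norm_add_le _ _
    have hn2 : ‖(δ * N) • u‖ = |δ * N| * ‖u‖ := by rw [norm_smul, Real.norm_eq_abs]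
    have hn3 : |δ * N| = δ * N := abs_of_nonneg (by positivity)
    have hδN : (0:ℝ) ≤ δ * N := by positivity
    have hn4 : δ * N * ‖u‖ ≤ δ * N * 1 := mul_le_mul_of_nonneg_left hu1 hδN
    nlinarith [norm_nonneg wh, mul_nonneg hδ.le (norm_nonneg wh), mul_nonneg hδ.le hN0]
end

section
/- Inf-sup transfer principle (the core argument of Theorem 3.2): let V_h ⊆ V and Q_h ⊆ Q be closed subspaces and let N : Q_h → ℝ be any nonnegative function (abstracting the mesh-dependent norm ‖div · ‖₋₁,h). Suppose there are constants C₁, C₂, C₃ > 0 such that for every χ_h ∈ Q_h: (i) sup over v_h ∈ V_h, v_h ≠ 0, of ⟨χ_h, G v_h⟩_Q / ‖v_h‖_V is ≥ C₁ ‖div χ_h‖₋₁ − C₂ N(χ_h), and (ii) the same supremum is ≥ C₃ N(χ_h). Then for every χ_h ∈ Q_h this supremum is ≥ (C₁ C₃ / (2 (C₂ + C₃))) ‖div χ_h‖₋₁; i.e., the discrete Babuška–Brezzi condition holds with constant C₁ C₃ / (2 (C₂ + C₃)). -/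
open scoped RealInnerProductSpace

/-- Inf-sup transfer principle (core argument of Theorem 3.2): if the discrete supremum
dominates `C₁ ‖div χ_h‖₋₁ − C₂ N(χ_h)` and also `C₃ N(χ_h)` for a nonnegative function `N`
(abstracting the mesh-dependent norm), then the discrete Babuška–Brezzi condition holds
with constant `C₁ C₃ / (2 (C₂ + C₃))`. -/
theorem infsup_transfer
    {V Q : Type*} [NormedAddCommGroup V] [InnerProductSpace ℝ V] [CompleteSpace V]
    [NormedAddCommGroup Q] [InnerProductSpace ℝ Q] [CompleteSpace Q]
    (G : V →L[ℝ] Q) (C_F : ℝ) (hC_F : 0 < C_F)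
    (hFriedrichs : ∀ v : V, ‖v‖ ≤ C_F * ‖G v‖)
    (Vh : Submodule ℝ V) (Qh : Submodule ℝ Q)
    (hVh : IsClosed (Vh : Set V)) (hQh : IsClosed (Qh : Set Q))
    (N : Q → ℝ) (hN : ∀ χh ∈ Qh, 0 ≤ N χh)
    (C₁ C₂ C₃ : ℝ) (hC₁ : 0 < C₁) (hC₂ : 0 < C₂) (hC₃ : 0 < C₃)
    (h1 : ∀ χh ∈ Qh, C₁ * divNorm G χh - C₂ * N χh ≤ discSup G Vh χh)
    (h2 : ∀ χh ∈ Qh, C₃ * N χh ≤ discSup G Vh χh) :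
    ∀ χh ∈ Qh, C₁ * C₃ / (2 * (C₂ + C₃)) * divNorm G χh ≤ discSup G Vh χh := by
  intro χh hχh
  have hd : 0 ≤ divNorm G χh := divNorm_nonneg G χh
  have H1 := h1 χh hχh
  have H2 := h2 χh hχh
  have hn := hN χh hχh
  set S := discSup G Vh χh
  set d := divNorm G χh
  -- C₃ * (C₁ d) ≤ C₃ S + C₂ C₃ n ≤ (C₂ + C₃) S
  have key : C₁ * C₃ * d ≤ (C₂ + C₃) * S := by nlinarith
  have hS : 0 ≤ S := by nlinarith
  rw [div_mul_eq_mul_div, div_le_iff₀ (by positivity)]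
  nlinarith
end

section
/- Uniqueness up to a divergence-free multiplier component: if (u₁, λ₁) ∈ V × Λ and (u₂, λ₂) ∈ V × Λ both solve the continuous variational inequality with the same datum f ∈ V, then u₁ = u₂ and ⟨λ₁ − λ₂, G v⟩_Q = 0 for all v ∈ V (equivalently ‖div(λ₁ − λ₂)‖₋₁ = 0), i.e. the two multipliers differ by a divergence-free element of Q. -/
open scoped RealInnerProductSpace

/-- Uniqueness up to a divergence-free multiplier component: two solutions of the
continuous variational inequality with the same datum have the same velocity, and the
multipliers differ by a divergence-free element of `Q`. -/
theorem uniqueness_up_to_divergence_free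
    {V Q : Type*} [NormedAddCommGroup V] [InnerProductSpace ℝ V] [CompleteSpace V]
    [NormedAddCommGroup Q] [InnerProductSpace ℝ Q] [CompleteSpace Q]
    (G : V →L[ℝ] Q) (C_F : ℝ) (hC_F : 0 < C_F)
    (hFriedrichs : ∀ v : V, ‖v‖ ≤ C_F * ‖G v‖)
    (Λ : Set Q) (hΛ : Λ.Nonempty) (f : V)
    (u₁ u₂ : V) (lam₁ lam₂ : Q) (hlam₁ : lam₁ ∈ Λ) (hlam₂ : lam₂ ∈ Λ)
    (hcont₁₁ : ∀ v : V, ⟪G u₁, G v⟫ + ⟪lam₁, G v⟫ = ⟪f, v⟫)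
    (hcont₁₂ : ∀ μ ∈ Λ, ⟪G u₁, μ - lam₁⟫ ≤ 0)
    (hcont₂₁ : ∀ v : V, ⟪G u₂, G v⟫ + ⟪lam₂, G v⟫ = ⟪f, v⟫)
    (hcont₂₂ : ∀ μ ∈ Λ, ⟪G u₂, μ - lam₂⟫ ≤ 0) :
    u₁ = u₂ ∧ (∀ v : V, ⟪lam₁ - lam₂, G v⟫ = 0) ∧ divNorm G (lam₁ - lam₂) = 0 := by
  -- Key identity: subtracting the two equations.
  have hdiff : ∀ v : V, ⟪G u₁ - G u₂, G v⟫ + ⟪lam₁ - lam₂, G v⟫ = 0 := by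
    intro v
    have h1 := hcont₁₁ v
    have h2 := hcont₂₁ v
    rw [inner_sub_left, inner_sub_left]
    linarith
  -- Inequalities give sign information.
  have hA := hcont₁₂ lam₂ hlam₂
  have hB := hcont₂₂ lam₁ hlam₁
  have hsign : 0 ≤ ⟪lam₁ - lam₂, G u₁ - G u₂⟫ := by
    rw [inner_sub_left, inner_sub_right, inner_sub_right]
    rw [inner_sub_right] at hA hB
    have c1 := real_inner_comm lam₁ (G u₁)
    have c2 := real_inner_comm lam₁ (G u₂)
    have c3 := real_inner_comm lam₂ (G u₁)
    have c4 := real_inner_comm lam₂ (G u₂)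
    linarith
  have hkey := hdiff (u₁ - u₂)
  rw [map_sub] at hkey
  have hGzero : G u₁ - G u₂ = 0 := by
    have : ⟪G u₁ - G u₂, G u₁ - G u₂⟫ ≤ 0 := by linarith
    have hnn := real_inner_self_nonneg (x := G u₁ - G u₂)
    have : ⟪G u₁ - G u₂, G u₁ - G u₂⟫ = 0 := le_antisymm this hnn
    exact inner_self_eq_zero.mp this
  have hueq : u₁ = u₂ := by
    have h := hFriedrichs (u₁ - u₂)
    rw [map_sub, hGzero] at h
    simp at h
    have : ‖u₁ - u₂‖ ≤ 0 := by simpa using h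
    have : u₁ - u₂ = 0 := by
      have := le_antisymm this (norm_nonneg _)
      exact norm_eq_zero.mp this
    exact sub_eq_zero.mp this
  have hortho : ∀ v : V, ⟪lam₁ - lam₂, G v⟫ = 0 := by
    intro v
    have := hdiff v
    rw [hGzero, inner_zero_left] at this
    linarith
  refine ⟨hueq, hortho, ?_⟩
  have : ∀ v : {v : V // v ≠ 0}, ⟪lam₁ - lam₂, G (v : V)⟫ / ‖(v : V)‖ = 0 := by
    intro v; rw [hortho]; simp
  unfold divNorm
  rw [iSup_congr this]
  exact Real.iSup_const_zero
end

section
/- Consistency estimate in the a posteriori analysis (final step of the reliability proof): let Ω ⊆ ℝ² be a measurable set of finite Lebesgue measure and let g, g_h, λ, λ_h ∈ L²(Ω, ℝ²) with |λ(x)| ≤ 1 for a.e. x ∈ Ω. If ∫_Ω g(x) · (λ_h(x) − λ(x)) dx ≤ 0, then ∫_Ω (g(x) − g_h(x)) · (λ_h(x) − λ(x)) dx ≤ ∫_Ω ( |g_h(x)| − g_h(x) · λ_h(x) ) dx, where | · | and · denote the Euclidean norm and dot product on ℝ². (In the paper, g = ∇u, g_h = ∇u_h, and the right-hand side is the consistency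 estimator Σ_T η²_{con,T}.) -/
/-!
Pointwise, `|λ| ≤ 1` and Cauchy–Schwarz give `g_h · λ ≤ |g_h|`, hence
`(g - g_h) · (λ_h - λ) ≤ g · (λ_h - λ) + (|g_h| - g_h · λ_h)`.
Integrating (every term is integrable since `L² ⊆ L¹` on a set of finite measure) and
dropping the nonpositive integral of `g · (λ_h - λ)` gives the estimate.
-/

open scoped RealInnerProductSpace
open MeasureTheory

section

variable {E : Type*} [NormedAddCommGroup E] [InnerProductSpace ℝ E]

lemma inner_sub_sub_le_of_norm_le_one {a b c d : E} (hd : ‖d‖ ≤ 1) :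
    ⟪a - b, c - d⟫ ≤ ⟪a, c - d⟫ + (‖b‖ - ⟪b, c⟫) := by
  have hbd : ⟪b, d⟫ ≤ ‖b‖ :=
    calc ⟪b, d⟫ ≤ ‖b‖ * ‖d‖ := real_inner_le_norm b d
      _ ≤ ‖b‖ := mul_le_of_le_one_right (norm_nonneg b) hd
  rw [inner_sub_left, inner_sub_right b]
  linarith

variable {α : Type*} [MeasurableSpace α] {μ : Measure α}

lemma MeasureTheory.MemLp.integrable_inner {f g : α → E} (hf : MemLp f 2 μ) (hg : MemLp g 2 μ) :
    Integrable (fun x => ⟪f x, g x⟫) μ :=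
  (L2.integrable_inner (𝕜 := ℝ) (hf.toLp f) (hg.toLp g)).congr <| by
    filter_upwards [hf.coeFn_toLp, hg.coeFn_toLp] with x hfx hgx
    rw [hfx, hgx]

theorem integral_inner_sub_sub_le [IsFiniteMeasure μ] {g gh lam lamh : α → E}
    (hg : MemLp g 2 μ) (hgh : MemLp gh 2 μ) (hlam : MemLp lam 2 μ) (hlamh : MemLp lamh 2 μ)
    (hbound : ∀ᵐ x ∂μ, ‖lam x‖ ≤ 1) (hineq : ∫ x, ⟪g x, lamh x - lam x⟫ ∂μ ≤ 0) :
    ∫ x, ⟪g x - gh x, lamh x - lam x⟫ ∂μ ≤ ∫ x, (‖gh x‖ - ⟪gh x, lamh x⟫) ∂μ := by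
  have hdiff : MemLp (fun x => lamh x - lam x) 2 μ := hlamh.sub hlam
  have hcons : Integrable (fun x => ‖gh x‖ - ⟪gh x, lamh x⟫) μ :=
    (hgh.integrable one_le_two).norm.sub (hgh.integrable_inner hlamh)
  calc ∫ x, ⟪g x - gh x, lamh x - lam x⟫ ∂μ
      ≤ ∫ x, (⟪g x, lamh x - lam x⟫ + (‖gh x‖ - ⟪gh x, lamh x⟫)) ∂μ :=
        integral_mono_ae ((hg.sub hgh).integrable_inner hdiff)
          ((hg.integrable_inner hdiff).add hcons)
          (hbound.mono fun x hx => inner_sub_sub_le_of_norm_le_one hx)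
    _ = ∫ x, ⟪g x, lamh x - lam x⟫ ∂μ + ∫ x, (‖gh x‖ - ⟪gh x, lamh x⟫) ∂μ :=
        integral_add (hg.integrable_inner hdiff) hcons
    _ ≤ ∫ x, (‖gh x‖ - ⟪gh x, lamh x⟫) ∂μ := add_le_of_nonpos_left hineq

end

theorem consistency_estimate_general
    (Ω : Set (EuclideanSpace ℝ (Fin 2)))
    (hfin : volume Ω < ⊤)
    (g gh lam lamh : EuclideanSpace ℝ (Fin 2) → EuclideanSpace ℝ (Fin 2))
    (hg : MemLp g 2 (volume.restrict Ω))
    (hgh : MemLp gh 2 (volume.restrict Ω))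
    (hlam : MemLp lam 2 (volume.restrict Ω))
    (hlamh : MemLp lamh 2 (volume.restrict Ω))
    (hbound : ∀ᵐ x ∂(volume.restrict Ω), ‖lam x‖ ≤ 1)
    (hineq : ∫ x in Ω, ⟪g x, lamh x - lam x⟫ ≤ 0) :
    ∫ x in Ω, ⟪g x - gh x, lamh x - lam x⟫ ≤ ∫ x in Ω, (‖gh x‖ - ⟪gh x, lamh x⟫) := by
  have : IsFiniteMeasure (volume.restrict Ω) := isFiniteMeasure_restrict.2 hfin.ne
  exact integral_inner_sub_sub_le hg hgh hlam hlamh hbound hineq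

/-- Consistency estimate in the a posteriori analysis (final step of the reliability
proof): if `|λ| ≤ 1` a.e. on `Ω` and `∫_Ω g · (λ_h − λ) ≤ 0`, then
`∫_Ω (g − g_h) · (λ_h − λ) ≤ ∫_Ω (|g_h| − g_h · λ_h)`. -/
theorem consistency_estimate
    (Ω : Set (EuclideanSpace ℝ (Fin 2))) (hΩ : MeasurableSet Ω)
    (hfin : volume Ω < ⊤)
    (g gh lam lamh : EuclideanSpace ℝ (Fin 2) → EuclideanSpace ℝ (Fin 2))
    (hg : MemLp g 2 (volume.restrict Ω))
    (hgh : MemLp gh 2 (volume.restrict Ω))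
    (hlam : MemLp lam 2 (volume.restrict Ω))
    (hlamh : MemLp lamh 2 (volume.restrict Ω))
    (hbound : ∀ᵐ x ∂(volume.restrict Ω), ‖lam x‖ ≤ 1)
    (hineq : ∫ x in Ω, ⟪g x, lamh x - lam x⟫ ≤ 0) :
    ∫ x in Ω, ⟪g x - gh x, lamh x - lam x⟫ ≤ ∫ x in Ω, (‖gh x‖ - ⟪gh x, lamh x⟫) :=
  consistency_estimate_general Ω hfin g gh lam lamh hg hgh hlam hlamh hbound hineq
end

section
/- Fixed-point reformulation of the inequality constraint (equation (14) of the paper): let E be a real inner product space, ρ > 0, and let x, l ∈ E with ‖l‖ ≤ 1. Define P(z) := z / max(1, ‖z‖). Then ⟨l, x⟩ = ‖x‖ if and only if l = P(l + ρ x). -/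
open scoped RealInnerProductSpace

/-- The scaling map `P(z) = z / max(1, ‖z‖)`. -/
noncomputable def scaleProj {E : Type*} [NormedAddCommGroup E] [InnerProductSpace ℝ E]
    (z : E) : E :=
  (max 1 ‖z‖)⁻¹ • z

/-- Fixed-point reformulation of the inequality constraint (equation (14) of the paper):
for `ρ > 0` and `‖l‖ ≤ 1`, one has `⟨l, x⟩ = ‖x‖` if and only if `l = P(l + ρ x)`. -/
theorem fixed_point_reformulation
    {E : Type*} [NormedAddCommGroup E] [InnerProductSpace ℝ E]
    (ρ : ℝ) (hρ : 0 < ρ) (x l : E) (hl : ‖l‖ ≤ 1) :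
    ⟪l, x⟫ = ‖x‖ ↔ l = scaleProj (l + ρ • x) := by
  constructor
  · intro h
    by_cases hx : x = 0
    · subst hx
      simp [scaleProj, max_eq_left hl]
    · have hxn : (0:ℝ) < ‖x‖ := norm_pos_iff.mpr hx
      have hcs : ⟪l, x⟫ ≤ ‖l‖ * ‖x‖ := real_inner_le_norm l x
      have hl1 : ‖l‖ = 1 := by nlinarith
      have heq : ‖x‖ • l = ‖l‖ • x := by
        rw [← inner_eq_norm_mul_iff_real]
        rw [h, hl1, one_mul]
      have hlx : l = ‖x‖⁻¹ • x := by
        rw [hl1, one_smul] at heq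
        have := congrArg (fun v => ‖x‖⁻¹ • v) heq.symm
        simpa [smul_smul, inv_mul_cancel₀ hxn.ne'] using this.symm
      have hsum : l + ρ • x = (‖x‖⁻¹ + ρ) • x := by
        rw [hlx, add_smul]
      have hns : ‖l + ρ • x‖ = 1 + ρ * ‖x‖ := by
        rw [hsum, norm_smul, Real.norm_eq_abs, abs_of_pos (by positivity)]
        field_simp
      have hge : 1 ≤ ‖l + ρ • x‖ := by rw [hns]; nlinarith
      rw [scaleProj, max_eq_right hge, hns, hsum, smul_smul, hlx]
      congr 1
      field_simp
  · intro h
    set m := max 1 ‖l + ρ • x‖ with hm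
    have hm1 : (1:ℝ) ≤ m := le_max_left _ _
    have hm0 : m ≠ 0 := by linarith
    have hml : m • l = l + ρ • x := by
      nth_rewrite 1 [h]
      rw [scaleProj, ← hm, smul_smul, mul_inv_cancel₀ hm0, one_smul]
    rcases eq_or_lt_of_le hm1 with hmeq | hmgt
    · have hx0 : x = 0 := by
        have : ρ • x = 0 := by
          have := hml
          rw [← hmeq, one_smul] at this
          linear_combination (norm := abel) -this
        simpa [hρ.ne'] using this
      subst hx0
      simp
    · have hmn : m = ‖l + ρ • x‖ := by
        rcases max_cases 1 ‖l + ρ • x‖ with ⟨h1, h2⟩ | ⟨h1, h2⟩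
        · rw [← hm] at h1; linarith
        · rw [← hm] at h1; exact h1
      have hln : ‖l‖ = 1 := by
        have h2 : ‖m • l‖ = m := by rw [hml, ← hmn]
        rw [norm_smul, Real.norm_eq_abs, abs_of_pos (by linarith)] at h2
        have := mul_left_cancel₀ hm0 (h2.trans (mul_one m).symm)
        exact this
      have hxl : x = ((m - 1) / ρ) • l := by
        have h1 : ρ • x = (m - 1) • l := by
          rw [sub_smul, one_smul, hml]; abel
        have := congrArg (fun v => ρ⁻¹ • v) h1
        simpa [smul_smul, inv_mul_cancel₀ hρ.ne', div_eq_inv_mul] using this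
      rw [hxl, real_inner_smul_right, real_inner_self_eq_norm_sq, hln, norm_smul,
        Real.norm_eq_abs, abs_of_nonneg (div_nonneg (by linarith) hρ.le), hln]
      ring
end
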